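/- The Mittag-Leffler polynomials M_n, defined by ∑_n M_n(x) t^n = ((1+t)/(1-t))^x, satisfy M_{2n+1}(x)/x = (2/(2n+1)) ∑_{k=0}^n M_{2k}(x) for all n ≥ 0 (as an identity of polynomials, noting M_{2n+1}(0) = 0). -/

import Mathlib

/-- The power series `log((1+t)/(1-t)) = ∑_{m odd} 2 t^m/m`. -/
noncomputable def Lser : PowerSeries (Polynomial ℚ) :=
  PowerSeries.mk fun m => if Odd m then Polynomial.C (2 / (m : ℚ)) else 0

/-- The `j`-th term `x^j log((1+t)/(1-t))^j / j!` in the expansion of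
`((1+t)/(1-t))^x = exp(x log((1+t)/(1-t)))`. -/
noncomputable def mlTerm (j : ℕ) : PowerSeries (Polynomial ℚ) :=
  PowerSeries.C (R := Polynomial ℚ)
      (Polynomial.C ((Nat.factorial j : ℚ)⁻¹) * Polynomial.X ^ j) * Lser ^ j

/-- The Mittag-Leffler polynomial `M_n`, the coefficient of `t^n` in
`((1+t)/(1-t))^x`.  (Terms `mlTerm j` with `j > n` have `t`-order greater
than `n`, so the truncated sum suffices.) -/
noncomputable def ML (n : ℕ) : Polynomial ℚ :=
  PowerSeries.coeff (R := Polynomial ℚ) n (∑ j ∈ Finset.range (n + 1), mlTerm j)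

/-! Writing `F = ∑ⱼ xʲ Lʲ / j! = exp (x L)` with `L = log ((1 + t) / (1 - t))`, we have
`L' = 2 / (1 - t²)`, hence `(1 - t²) F' = 2 x F`. Comparing coefficients of `tᵐ` gives
`(m + 1) M_{m+1} = (m - 1) M_{m-1} + 2 x M_m`, and this telescopes along the odd indices to
`(2n + 1) M_{2n+1} = 2 x ∑_{k ≤ n} M_{2k}`. Since `X ∣ L`, the term `mlTerm j` only
contributes to coefficients of index `≥ j`, so all of this can be done with finite partial
sums of `F`. -/

open PowerSeries Finset
open scoped Nat

lemma X_dvd_Lser : (X : PowerSeries (Polynomial ℚ)) ∣ Lser := by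
  rw [X_dvd_iff]
  simp [Lser]

lemma coeff_mlTerm_of_lt {m j : ℕ} (h : m < j) : coeff m (mlTerm j) = 0 :=
  X_pow_dvd_iff.mp ((pow_dvd_pow_of_dvd X_dvd_Lser j).mul_left _) m h

lemma ML_eq_coeff_sum_mlTerm {n N : ℕ} (h : n < N) :
    ML n = coeff n (∑ j ∈ range N, mlTerm j) := by
  rw [ML, ← sum_range_add_sum_Ico _ h, map_add, left_eq_add, map_sum]
  exact sum_eq_zero fun j hj => coeff_mlTerm_of_lt (mem_Ico.mp hj).1

lemma coeff_derivative_Lser (n : ℕ) :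
    coeff n (d⁄dX (Polynomial ℚ) Lser) = if Even n then 2 else 0 := by
  rw [coeff_derivative, Lser, coeff_mk]
  by_cases hn : Even n
  · have hn1 : ((n : ℚ) + 1) ≠ 0 := by positivity
    rw [if_pos hn.add_one, if_pos hn, ← Polynomial.C_eq_natCast, ← Polynomial.C_1,
      ← Polynomial.C_add, ← Polynomial.C_mul, Nat.cast_add_one, div_mul_cancel₀ _ hn1]
    exact map_ofNat _ 2
  · rw [if_neg (by simpa [Nat.odd_add_one] using hn), if_neg hn, zero_mul]

lemma one_sub_X_sq_mul_derivative_Lser :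
    (1 - X ^ 2 : PowerSeries (Polynomial ℚ)) * d⁄dX (Polynomial ℚ) Lser = 2 := by
  ext n
  rw [sub_mul, one_mul, map_sub, coeff_X_pow_mul', coeff_derivative_Lser,
    ← map_ofNat (C (R := Polynomial ℚ)) 2, coeff_C]
  rcases n with _ | _ | n
  · simp
  · simp
  · simp [coeff_derivative_Lser, Nat.even_add]

lemma PowerSeries.derivative_C_mul {R : Type*} [CommSemiring R] (r : R) (f : PowerSeries R) :
    d⁄dX R (C r * f) = C r * d⁄dX R f := by
  simp [(derivative R).leibniz]

lemma derivative_mlTerm_zero : d⁄dX (Polynomial ℚ) (mlTerm 0) = 0 := by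
  simp [mlTerm]

lemma derivative_mlTerm_succ (j : ℕ) :
    d⁄dX (Polynomial ℚ) (mlTerm (j + 1)) =
      C Polynomial.X * d⁄dX (Polynomial ℚ) Lser * mlTerm j := by
  have hfact : ((j + 1)! : ℚ)⁻¹ * (j + 1 : ℕ) = (j ! : ℚ)⁻¹ := by
    rw [Nat.factorial_succ, Nat.cast_mul, mul_inv, mul_right_comm,
      inv_mul_cancel₀ (by positivity), one_mul]
  have hcoeff := congrArg (fun q => C (Polynomial.C q * Polynomial.X ^ (j + 1))) hfact
  simp only [map_mul, map_pow, map_natCast] at hcoeff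
  rw [mlTerm, mlTerm, derivative_C_mul, derivative_pow, Nat.add_sub_cancel]
  simp only [map_mul, map_pow]
  linear_combination (Lser ^ j * d⁄dX (Polynomial ℚ) Lser) * hcoeff

lemma one_sub_X_sq_mul_derivative_sum_mlTerm (N : ℕ) :
    (1 - X ^ 2 : PowerSeries (Polynomial ℚ)) *
        d⁄dX (Polynomial ℚ) (∑ j ∈ range (N + 1), mlTerm j) =
      C (2 * Polynomial.X) * ∑ j ∈ range N, mlTerm j := by
  rw [map_sum, sum_range_succ', derivative_mlTerm_zero, add_zero, mul_sum, mul_sum]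
  refine sum_congr rfl fun j _ => ?_
  rw [derivative_mlTerm_succ, map_mul, map_ofNat, ← one_sub_X_sq_mul_derivative_Lser]
  ring

lemma PowerSeries.coeff_one_sub_X_sq_mul {R : Type*} [CommRing R] (f : PowerSeries R) (n : ℕ) :
    coeff n ((1 - X ^ 2) * f) = coeff n f - if 2 ≤ n then coeff (n - 2) f else 0 := by
  rw [sub_mul, one_mul, map_sub, coeff_X_pow_mul']

lemma ML_one : ML 1 = 2 * Polynomial.X * ML 0 := by
  have h := congrArg (coeff 0) (one_sub_X_sq_mul_derivative_sum_mlTerm 1)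
  rw [coeff_one_sub_X_sq_mul, coeff_derivative, coeff_C_mul,
    ← ML_eq_coeff_sum_mlTerm (by norm_num), ← ML_eq_coeff_sum_mlTerm (by norm_num)] at h
  simpa using h

lemma ML_recurrence (m : ℕ) :
    ((m + 3 : ℕ) : Polynomial ℚ) * ML (m + 3) =
      ((m + 1 : ℕ) : Polynomial ℚ) * ML (m + 1) + 2 * Polynomial.X * ML (m + 2) := by
  have h := congrArg (coeff (m + 2)) (one_sub_X_sq_mul_derivative_sum_mlTerm (m + 4))
  rw [coeff_one_sub_X_sq_mul, if_pos (by omega), Nat.add_sub_cancel, coeff_derivative,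
    coeff_derivative, coeff_C_mul, ← ML_eq_coeff_sum_mlTerm (by omega),
    ← ML_eq_coeff_sum_mlTerm (by omega), ← ML_eq_coeff_sum_mlTerm (by omega)] at h
  push_cast at h ⊢
  linear_combination h

lemma natCast_mul_ML_odd (n : ℕ) :
    ((2 * n + 1 : ℕ) : Polynomial ℚ) * ML (2 * n + 1) =
      2 * Polynomial.X * ∑ k ∈ range (n + 1), ML (2 * k) := by
  induction n with
  | zero => simpa using ML_one
  | succ n ih =>
    rw [show 2 * (n + 1) + 1 = 2 * n + 3 by ring, ML_recurrence, ih, sum_range_succ _ (n + 1),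
      mul_add, mul_add, mul_one]

/-- `M_{2n+1}(x)/x = (2/(2n+1)) ∑_{k=0}^n M_{2k}(x)`, stated as the polynomial
identity `M_{2n+1}(x) = x · (2/(2n+1)) ∑_{k=0}^n M_{2k}(x)`. -/
theorem stmt12 (n : ℕ) :
    ML (2 * n + 1) =
      Polynomial.X * ((2 / (2 * (n : ℚ) + 1)) • ∑ k ∈ Finset.range (n + 1), ML (2 * k)) := by
  have hn : (2 * (n : ℚ) + 1) ≠ 0 := by positivity
  have hC : Polynomial.C (2 * (n : ℚ) + 1) * Polynomial.C (2 / (2 * (n : ℚ) + 1)) = 2 := by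
    rw [← Polynomial.C_mul, mul_div_cancel₀ _ hn]
    exact map_ofNat _ 2
  have h := natCast_mul_ML_odd n
  rw [← Polynomial.C_eq_natCast] at h
  push_cast at h
  rw [Polynomial.smul_eq_C_mul]
  apply mul_left_cancel₀ (Polynomial.C_ne_zero.mpr hn)
  linear_combination h - Polynomial.X * (∑ k ∈ Finset.range (n + 1), ML (2 * k)) * hC
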